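/- In the CAR setting with vacuum, for each subset M ⊆ {1,2,3,4}, written as M = {a₁ < a₂ < ⋯ < a_i}, define η_M = (χ̄¹_{a₁}⋯χ̄¹_{a_i})(χ̄²_{a₁}⋯χ̄²_{a_i})⋯(χ̄ⁿ_{a₁}⋯χ̄ⁿ_{a_i}) η₀ (with η_∅ = η₀). Then: (a) the 16 vectors η_M, M ∈ 𝒫({1,2,3,4}), are mutually orthogonal unit vectors; (b) L_k η_M = 0 for all 1 ≤ k < n; (c) Σ_{a=1}^4 χ̄ᵏ_a χᵐ_a η_M = 0 for all 1 ≤ k < m ≤ n. In particular, the subspace F₀ = {η ∈ V : L_k η = 0 for all 1 ≤ k < n and Σ_{a=1}^4 χ̄ᵏ_a χᵐ_a η = 0 for all 1 ≤ k < m ≤ n} has complex dimension at least 16. -/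

import Mathlib

/-!
Index the modes by pairs `(k, a)`, so that `η_M` is the product of the creators along a word that
lists each mode `(k, a)` with `a ∈ M` exactly once. For a vacuum vector the relations give:
a creator applied to a state in which its mode is empty preserves the norm; two such words that
occupy different modes give orthogonal states (move the annihilator onto the vacuum); `χ̄ᵢχᵢ` is
the occupation number of mode `i`, so `Σ_a χ̄ᵏ_a χᵏ_a` acts on `η_M` as `|M|` whatever `k` is; and
`χ̄ᵏ_a χᵐ_a` with `k ≠ m` moves a particle from `(m, a)` to `(k, a)`, which in `η_M` is occupied
exactly when `(m, a)` is, so Pauli exclusion kills it. The 16 orthonormal vectors then lie in `F₀`.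
-/

/-- The ordered product of creation operators `χ̄ᵏ_{a₁}⋯χ̄ᵏ_{a_i}` over a subset
`M = {a₁ < ⋯ < a_i} ⊆ {1,2,3,4}` for fixed colour `k`. -/
noncomputable def chiBarProd {V : Type*} [AddCommGroup V] [Module ℂ V] {n : ℕ}
    (χbar : Fin n → Fin 4 → (V →ₗ[ℂ] V)) (k : Fin n) (M : Finset (Fin 4)) :
    V →ₗ[ℂ] V :=
  ((M.sort (· ≤ ·)).map (χbar k)).prod

/-- The vector `η_M = (χ̄¹_{a₁}⋯χ̄¹_{a_i})(χ̄²_{a₁}⋯χ̄²_{a_i})⋯(χ̄ⁿ_{a₁}⋯χ̄ⁿ_{a_i}) η₀`. -/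
noncomputable def etaM {V : Type*} [AddCommGroup V] [Module ℂ V] {n : ℕ}
    (χbar : Fin n → Fin 4 → (V →ₗ[ℂ] V)) (M : Finset (Fin 4)) (η₀ : V) : V :=
  (((List.finRange n).map fun k => chiBarProd χbar k M).prod) η₀

section CreationProd

variable {R V ι : Type*} [Ring R] [AddCommGroup V] [Module R V] {c cbar : ι → V →ₗ[R] V}

noncomputable def creationProd (cbar : ι → V →ₗ[R] V) (t : List ι) : V →ₗ[R] V :=
  (t.map cbar).prod

@[simp]
lemma creationProd_nil_apply (v : V) : creationProd cbar [] v = v := rfl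

@[simp]
lemma creationProd_cons_apply (j : ι) (t : List ι) (v : V) :
    creationProd cbar (j :: t) v = cbar j (creationProd cbar t v) := by
  simp only [creationProd, List.map_cons, List.prod_cons, Module.End.mul_apply]

lemma create_create (hcre : ∀ i j, cbar i ∘ₗ cbar j + cbar j ∘ₗ cbar i = 0) (i j : ι) (x : V) :
    cbar i (cbar j x) = -cbar j (cbar i x) :=
  eq_neg_of_add_eq_zero_left (LinearMap.congr_fun (hcre i j) x)

lemma create_create_self [IsAddTorsionFree V]
    (hcre : ∀ i j, cbar i ∘ₗ cbar j + cbar j ∘ₗ cbar i = 0) (i : ι) (x : V) :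
    cbar i (cbar i x) = 0 :=
  self_eq_neg.mp (create_create hcre i i x)

lemma create_creationProd_of_mem [IsAddTorsionFree V]
    (hcre : ∀ i j, cbar i ∘ₗ cbar j + cbar j ∘ₗ cbar i = 0) {i : ι} {t : List ι} (hi : i ∈ t)
    (v : V) : cbar i (creationProd cbar t v) = 0 := by
  induction t with
  | nil => cases hi
  | cons j t ih =>
    rw [creationProd_cons_apply]
    obtain rfl | hit := List.mem_cons.mp hi
    · exact create_create_self hcre i _
    · rw [create_create hcre, ih hit, map_zero, neg_zero]

variable [DecidableEq ι]

lemma annihilate_create_self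
    (hmixed : ∀ i j, c i ∘ₗ cbar j + cbar j ∘ₗ c i = if i = j then LinearMap.id else 0)
    (i : ι) (x : V) : c i (cbar i x) = x - cbar i (c i x) := by
  have := LinearMap.congr_fun (hmixed i i) x
  simp only [if_pos, LinearMap.add_apply, LinearMap.comp_apply, LinearMap.id_apply] at this
  exact eq_sub_of_add_eq this

lemma annihilate_create_of_ne
    (hmixed : ∀ i j, c i ∘ₗ cbar j + cbar j ∘ₗ c i = if i = j then LinearMap.id else 0)
    {i j : ι} (hij : i ≠ j) (x : V) : c i (cbar j x) = -cbar j (c i x) := by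
  have := LinearMap.congr_fun (hmixed i j) x
  simp only [if_neg hij, LinearMap.add_apply, LinearMap.comp_apply, LinearMap.zero_apply] at this
  exact eq_neg_of_add_eq_zero_left this

lemma annihilate_creationProd_of_notMem
    (hmixed : ∀ i j, c i ∘ₗ cbar j + cbar j ∘ₗ c i = if i = j then LinearMap.id else 0)
    {i : ι} {t : List ι} (hi : i ∉ t) {v : V} (hv : c i v = 0) :
    c i (creationProd cbar t v) = 0 := by
  induction t with
  | nil => exact hv
  | cons j t ih =>
    rw [List.mem_cons, not_or] at hi
    rw [creationProd_cons_apply, annihilate_create_of_ne hmixed hi.1, ih hi.2, map_zero, neg_zero]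

lemma annihilate_creationProd_of_mem
    (hmixed : ∀ i j, c i ∘ₗ cbar j + cbar j ∘ₗ c i = if i = j then LinearMap.id else 0)
    {i : ι} {t : List ι} (ht : t.Nodup) (hi : i ∈ t) {v : V} (hv : c i v = 0) :
    c i (creationProd cbar t v) = (-1 : R) ^ t.idxOf i • creationProd cbar (t.erase i) v := by
  induction t with
  | nil => cases hi
  | cons j t ih =>
    rw [List.nodup_cons] at ht
    obtain rfl | hij := eq_or_ne i j
    · rw [creationProd_cons_apply, annihilate_create_self hmixed,
        annihilate_creationProd_of_notMem hmixed ht.1 hv, List.idxOf_cons_self,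
        List.erase_cons_head, map_zero, sub_zero, pow_zero, one_smul]
    · have hit : i ∈ t := (List.mem_cons.mp hi).resolve_left hij
      rw [creationProd_cons_apply, annihilate_create_of_ne hmixed hij, ih ht.2 hit,
        List.idxOf_cons_ne _ hij.symm, List.erase_cons_tail (by simpa using hij.symm),
        creationProd_cons_apply, map_smul, pow_succ, mul_neg_one, neg_smul]

lemma number_creationProd
    (hmixed : ∀ i j, c i ∘ₗ cbar j + cbar j ∘ₗ c i = if i = j then LinearMap.id else 0)
    (hcre : ∀ i j, cbar i ∘ₗ cbar j + cbar j ∘ₗ cbar i = 0)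
    (i : ι) {t : List ι} (ht : t.Nodup) {v : V} (hv : c i v = 0) :
    cbar i (c i (creationProd cbar t v)) = if i ∈ t then creationProd cbar t v else 0 := by
  induction t with
  | nil => simp [hv]
  | cons j t ih =>
    rw [List.nodup_cons] at ht
    obtain rfl | hij := eq_or_ne i j
    · rw [creationProd_cons_apply, annihilate_create_self hmixed,
        annihilate_creationProd_of_notMem hmixed ht.1 hv, map_zero, sub_zero,
        if_pos List.mem_cons_self]
    · rw [creationProd_cons_apply, annihilate_create_of_ne hmixed hij, map_neg, create_create hcre,
        neg_neg, ih ht.2]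
      simp only [List.mem_cons, hij, false_or]
      split_ifs <;> simp

lemma create_annihilate_creationProd_of_ne [IsAddTorsionFree V]
    (hmixed : ∀ i j, c i ∘ₗ cbar j + cbar j ∘ₗ c i = if i = j then LinearMap.id else 0)
    (hcre : ∀ i j, cbar i ∘ₗ cbar j + cbar j ∘ₗ cbar i = 0)
    {i j : ι} (hij : i ≠ j) {t : List ι} (ht : t.Nodup) (hmem : i ∈ t ↔ j ∈ t) {v : V}
    (hv : c j v = 0) : cbar i (c j (creationProd cbar t v)) = 0 := by
  by_cases hjt : j ∈ t
  · rw [annihilate_creationProd_of_mem hmixed ht hjt hv, map_smul,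
      create_creationProd_of_mem hcre ((List.mem_erase_of_ne hij).mpr (hmem.mpr hjt)), smul_zero]
  · rw [annihilate_creationProd_of_notMem hmixed hjt hv, map_zero]

end CreationProd

section Vacuum

variable {𝕜 V ι : Type*} [RCLike 𝕜] [NormedAddCommGroup V] [InnerProductSpace 𝕜 V]
  [DecidableEq ι] {c cbar : ι → V →ₗ[𝕜] V}

lemma norm_create_of_annihilate_eq_zero
    (hadj : ∀ i (u v : V), inner 𝕜 (cbar i u) v = inner 𝕜 u (c i v))
    (hmixed : ∀ i j, c i ∘ₗ cbar j + cbar j ∘ₗ c i = if i = j then LinearMap.id else 0)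
    {i : ι} {w : V} (hw : c i w = 0) : ‖cbar i w‖ = ‖w‖ := by
  have hinner : inner 𝕜 (cbar i w) (cbar i w) = inner 𝕜 w w := by
    rw [hadj, annihilate_create_self hmixed, hw, map_zero, sub_zero]
  rw [← sq_eq_sq₀ (norm_nonneg _) (norm_nonneg _), ← inner_self_eq_norm_sq (𝕜 := 𝕜),
    ← inner_self_eq_norm_sq (𝕜 := 𝕜), hinner]

lemma norm_creationProd_of_vacuum
    (hadj : ∀ i (u v : V), inner 𝕜 (cbar i u) v = inner 𝕜 u (c i v))
    (hmixed : ∀ i j, c i ∘ₗ cbar j + cbar j ∘ₗ c i = if i = j then LinearMap.id else 0)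
    {t : List ι} (ht : t.Nodup) {v : V} (hv : ∀ i, c i v = 0) :
    ‖creationProd cbar t v‖ = ‖v‖ := by
  induction t with
  | nil => rfl
  | cons j t ih =>
    rw [List.nodup_cons] at ht
    rw [creationProd_cons_apply, norm_create_of_annihilate_eq_zero hadj hmixed
      (annihilate_creationProd_of_notMem hmixed ht.1 (hv j)), ih ht.2]

lemma inner_creationProd_of_vacuum_eq_zero
    (hadj : ∀ i (u v : V), inner 𝕜 (cbar i u) v = inner 𝕜 u (c i v))
    (hmixed : ∀ i j, c i ∘ₗ cbar j + cbar j ∘ₗ c i = if i = j then LinearMap.id else 0)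
    {v : V} (hv : ∀ i, c i v = 0) {i : ι} :
    ∀ {s t : List ι}, t.Nodup → ¬(i ∈ s ↔ i ∈ t) →
      inner 𝕜 (creationProd cbar s v) (creationProd cbar t v) = 0
  | [], [], _, hi => absurd Iff.rfl hi
  | [], j :: t, _, _ => by
    rw [inner_eq_zero_symm, creationProd_cons_apply, hadj, creationProd_nil_apply, hv,
      inner_zero_right]
  | j :: s, t, ht, hi => by
    rw [creationProd_cons_apply, hadj]
    by_cases hjt : j ∈ t
    · have hij : i ≠ j := by rintro rfl; simp [hjt] at hi
      rw [annihilate_creationProd_of_mem hmixed ht hjt (hv j), inner_smul_right,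
        inner_creationProd_of_vacuum_eq_zero hadj hmixed hv (ht.erase j)
          (by rw [List.mem_erase_of_ne hij]; simpa [hij] using hi), mul_zero]
    · rw [annihilate_creationProd_of_notMem hmixed hjt (hv j), inner_zero_right]

end Vacuum

lemma Orthonormal.card_le_rank_of_forall_mem {𝕜 E ι : Type*} [RCLike 𝕜] [NormedAddCommGroup E]
    [InnerProductSpace 𝕜 E] [Fintype ι] {v : ι → E} (hv : Orthonormal 𝕜 v) {W : Submodule 𝕜 E}
    (hW : ∀ i, v i ∈ W) : (Fintype.card ι : Cardinal) ≤ Module.rank 𝕜 W := by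
  simpa using (LinearIndependent.of_comp W.subtype (v := fun i => (⟨v i, hW i⟩ : W))
    hv.linearIndependent).cardinal_lift_le_rank

lemma uncurry_anticomm {R V κ α : Type*} [Ring R] [AddCommGroup V] [Module R V] [DecidableEq κ]
    [DecidableEq α] {f g : κ → α → V →ₗ[R] V}
    (h : ∀ k m a b, f k a ∘ₗ g m b + g m b ∘ₗ f k a = if k = m ∧ a = b then LinearMap.id else 0)
    (i j : κ × α) :
    Function.uncurry f i ∘ₗ Function.uncurry g j + Function.uncurry g j ∘ₗ Function.uncurry f i =
      if i = j then LinearMap.id else 0 := by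
  simpa only [Prod.ext_iff, Function.uncurry_def] using h i.1 j.1 i.2 j.2

def etaWord (n : ℕ) (M : Finset (Fin 4)) : List (Fin n × Fin 4) :=
  (List.finRange n).flatMap fun k => (M.sort (· ≤ ·)).map (k, ·)

lemma mem_etaWord {n : ℕ} {M : Finset (Fin 4)} {k : Fin n} {a : Fin 4} :
    (k, a) ∈ etaWord n M ↔ a ∈ M := by
  simp [etaWord]

lemma nodup_etaWord (n : ℕ) (M : Finset (Fin 4)) : (etaWord n M).Nodup := by
  refine List.nodup_flatMap.2 ⟨fun k _ => (M.sort_nodup _).map fun a b h => (Prod.mk.inj h).2,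
    (List.nodup_finRange n).imp fun hkl => List.disjoint_left.2 ?_⟩
  simp only [List.mem_map]
  rintro _ ⟨a, _, rfl⟩ ⟨b, _, h⟩
  exact hkl (Prod.mk.inj h).1.symm

lemma etaM_eq_creationProd {V : Type*} [AddCommGroup V] [Module ℂ V] {n : ℕ}
    (χbar : Fin n → Fin 4 → V →ₗ[ℂ] V) (M : Finset (Fin 4)) (η₀ : V) :
    etaM χbar M η₀ = creationProd (Function.uncurry χbar) (etaWord n M) η₀ := by
  simp [etaM, chiBarProd, creationProd, etaWord, List.flatMap_def, List.prod_flatten,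
    Function.comp_def]

section Number

variable {V : Type*} [AddCommGroup V] [Module ℂ V] {n : ℕ} {χ χbar : Fin n → Fin 4 → V →ₗ[ℂ] V}
  {η₀ : V}

lemma sum_create_annihilate_etaM_self
    (hCAR₁ : ∀ k m a b, χ k a ∘ₗ χbar m b + χbar m b ∘ₗ χ k a =
      if k = m ∧ a = b then LinearMap.id else 0)
    (hCAR₃ : ∀ k m a b, χbar k a ∘ₗ χbar m b + χbar m b ∘ₗ χbar k a = 0)
    (hvac : ∀ k a, χ k a η₀ = 0) (M : Finset (Fin 4)) (k : Fin n) :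
    (∑ a, χbar k a ∘ₗ χ k a) (etaM χbar M η₀) = (M.card : ℂ) • etaM χbar M η₀ := by
  have hnum (a : Fin 4) := number_creationProd (uncurry_anticomm hCAR₁)
    (fun i j => hCAR₃ i.1 j.1 i.2 j.2) (k, a) (nodup_etaWord n M) (hvac k a)
  simp only [Function.uncurry_apply_pair, mem_etaWord] at hnum
  simp only [etaM_eq_creationProd, LinearMap.sum_apply, LinearMap.comp_apply, hnum]
  rw [Finset.sum_ite_mem, Finset.univ_inter, Finset.sum_const, Nat.cast_smul_eq_nsmul]

lemma sum_create_annihilate_etaM_of_ne [IsAddTorsionFree V]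
    (hCAR₁ : ∀ k m a b, χ k a ∘ₗ χbar m b + χbar m b ∘ₗ χ k a =
      if k = m ∧ a = b then LinearMap.id else 0)
    (hCAR₃ : ∀ k m a b, χbar k a ∘ₗ χbar m b + χbar m b ∘ₗ χbar k a = 0)
    (hvac : ∀ k a, χ k a η₀ = 0) (M : Finset (Fin 4)) {k m : Fin n} (hkm : k ≠ m) :
    (∑ a, χbar k a ∘ₗ χ m a) (etaM χbar M η₀) = 0 := by
  rw [etaM_eq_creationProd, LinearMap.sum_apply]
  refine Finset.sum_eq_zero fun a _ => ?_
  exact create_annihilate_creationProd_of_ne (c := Function.uncurry χ) (uncurry_anticomm hCAR₁)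
    (fun i j => hCAR₃ i.1 j.1 i.2 j.2) (i := (k, a)) (j := (m, a)) (by simp [hkm])
    (nodup_etaWord n M) (by simp only [mem_etaWord]) (hvac m a)

end Number

section Orthonormal

variable {V : Type*} [NormedAddCommGroup V] [InnerProductSpace ℂ V] {n : ℕ}
  {χ χbar : Fin n → Fin 4 → V →ₗ[ℂ] V} {η₀ : V}

lemma norm_etaM (hadj : ∀ k a (u v : V), (inner ℂ (χbar k a u) v : ℂ) = inner ℂ u (χ k a v))
    (hCAR₁ : ∀ k m a b, χ k a ∘ₗ χbar m b + χbar m b ∘ₗ χ k a =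
      if k = m ∧ a = b then LinearMap.id else 0)
    (hvac : ∀ k a, χ k a η₀ = 0) (M : Finset (Fin 4)) : ‖etaM χbar M η₀‖ = ‖η₀‖ := by
  rw [etaM_eq_creationProd]
  exact norm_creationProd_of_vacuum (c := Function.uncurry χ) (fun i => hadj i.1 i.2)
    (uncurry_anticomm hCAR₁) (nodup_etaWord n M) (fun i => hvac i.1 i.2)

lemma inner_etaM_eq_zero (hn : 0 < n)
    (hadj : ∀ k a (u v : V), (inner ℂ (χbar k a u) v : ℂ) = inner ℂ u (χ k a v))
    (hCAR₁ : ∀ k m a b, χ k a ∘ₗ χbar m b + χbar m b ∘ₗ χ k a =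
      if k = m ∧ a = b then LinearMap.id else 0)
    (hvac : ∀ k a, χ k a η₀ = 0) {M M' : Finset (Fin 4)} (hMM' : M ≠ M') :
    inner ℂ (etaM χbar M η₀) (etaM χbar M' η₀) = 0 := by
  obtain ⟨a, ha⟩ : ∃ a, ¬(a ∈ M ↔ a ∈ M') := by simpa [Finset.ext_iff] using hMM'
  rw [etaM_eq_creationProd, etaM_eq_creationProd]
  exact inner_creationProd_of_vacuum_eq_zero (c := Function.uncurry χ) (fun i => hadj i.1 i.2)
    (uncurry_anticomm hCAR₁) (fun i => hvac i.1 i.2) (i := (⟨0, hn⟩, a)) (nodup_etaWord n M')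
    (by simpa only [mem_etaWord] using ha)

end Orthonormal

/-- In the CAR setting with vacuum, the 16 vectors `η_M`,
`M ∈ 𝒫({1,2,3,4})`, are mutually orthogonal unit vectors annihilated by all the operators
`L_k` (`1 ≤ k < n`) and `Σ_a χ̄ᵏ_a χᵐ_a` (`1 ≤ k < m ≤ n`); in particular the joint kernel
`F₀` of these operators has complex dimension at least `16`. -/
theorem etaM_orthonormal_and_dim_F0 {V : Type*} [NormedAddCommGroup V]
    [InnerProductSpace ℂ V]
    (n : ℕ) (hn : 2 ≤ n) (χ χbar : Fin n → Fin 4 → (V →ₗ[ℂ] V))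
    (hadj : ∀ k a (u v : V), (inner ℂ (χbar k a u) v : ℂ) = inner ℂ u (χ k a v))
    (hCAR₁ : ∀ k m a b, χ k a ∘ₗ χbar m b + χbar m b ∘ₗ χ k a =
      if k = m ∧ a = b then LinearMap.id else 0)
    (hCAR₃ : ∀ k m a b, χbar k a ∘ₗ χbar m b + χbar m b ∘ₗ χbar k a = 0)
    (η₀ : V) (hη₀ : ‖η₀‖ = 1) (hvac : ∀ k a, χ k a η₀ = 0) :
    -- (a) mutually orthogonal unit vectors
    (∀ M : Finset (Fin 4), ‖etaM χbar M η₀‖ = 1) ∧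
    (∀ M M' : Finset (Fin 4), M ≠ M' →
      (inner ℂ (etaM χbar M η₀) (etaM χbar M' η₀) : ℂ) = 0) ∧
    -- (b) `L_k η_M = 0` for `1 ≤ k < n`
    (∀ (M : Finset (Fin 4)) (k : Fin n), (k : ℕ) < n - 1 →
      ((∑ a, χbar k a ∘ₗ χ k a) -
       (∑ a, χbar ⟨n - 1, by omega⟩ a ∘ₗ χ ⟨n - 1, by omega⟩ a)) (etaM χbar M η₀) = 0) ∧
    -- (c) `Σ_a χ̄ᵏ_a χᵐ_a η_M = 0` for `1 ≤ k < m ≤ n`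
    (∀ (M : Finset (Fin 4)) (k m : Fin n), k < m →
      (∑ a, χbar k a ∘ₗ χ m a) (etaM χbar M η₀) = 0) ∧
    -- dimension of `F₀` is at least 16
    16 ≤ Module.rank ℂ
      ↥((⨅ k : Fin n, ⨅ _ : (k : ℕ) < n - 1,
          LinearMap.ker ((∑ a, χbar k a ∘ₗ χ k a) -
            (∑ a, χbar ⟨n - 1, by omega⟩ a ∘ₗ χ ⟨n - 1, by omega⟩ a))) ⊓
        (⨅ k : Fin n, ⨅ m : Fin n, ⨅ _ : k < m,
          LinearMap.ker (∑ a, χbar k a ∘ₗ χ m a))) := by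
  have : IsAddTorsionFree V := .of_isTorsionFree ℂ V
  have hnorm (M : Finset (Fin 4)) : ‖etaM χbar M η₀‖ = 1 :=
    (norm_etaM hadj hCAR₁ hvac M).trans hη₀
  have horth (M M' : Finset (Fin 4)) (h : M ≠ M') :
      inner ℂ (etaM χbar M η₀) (etaM χbar M' η₀) = 0 :=
    inner_etaM_eq_zero (by omega) hadj hCAR₁ hvac h
  have hL (M : Finset (Fin 4)) (k : Fin n) (_ : (k : ℕ) < n - 1) :
      ((∑ a, χbar k a ∘ₗ χ k a) -
       (∑ a, χbar ⟨n - 1, by omega⟩ a ∘ₗ χ ⟨n - 1, by omega⟩ a)) (etaM χbar M η₀) = 0 := by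
    rw [LinearMap.sub_apply, sum_create_annihilate_etaM_self hCAR₁ hCAR₃ hvac,
      sum_create_annihilate_etaM_self hCAR₁ hCAR₃ hvac, sub_self]
  have hmix (M : Finset (Fin 4)) (k m : Fin n) (hkm : k < m) :
      (∑ a, χbar k a ∘ₗ χ m a) (etaM χbar M η₀) = 0 :=
    sum_create_annihilate_etaM_of_ne hCAR₁ hCAR₃ hvac M hkm.ne
  refine ⟨hnorm, horth, hL, hmix, ?_⟩
  refine (Orthonormal.card_le_rank_of_forall_mem ⟨hnorm, horth⟩ fun M => ?_).trans' (by simp)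
  simp only [Submodule.mem_inf, Submodule.mem_iInf, LinearMap.mem_ker]
  exact ⟨hL M, hmix M⟩
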